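/- Let γ be an interior vertex shared by exactly 4 faces σ₁,...,σ₄ (indices mod 4) with coordinate rings ℝ[u_i,v_i] and transition maps u_i ↦ −v_{i+1}, v_i ↦ u_{i+1} + a₂ u_{i+1}² v_{i+1} modulo squares. Then I¹(γ) = ⟨ u_i + v_{i+1}, v_i − u_{i+1}, u_i², v_i² : i = 1,2,3,4 ⟩ in ℝ[u₁,v₁,...,u₄,v₄]. Moreover dim Q¹_{(d,d)}(γ) = 4 for d ≥ 1 and dim Q¹_d(γ) = 4 for d ≥ 2, with representatives {1, u₄, v₄, u₄v₄}. -/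

import Mathlib

set_option synthInstance.maxHeartbeats 1000000
set_option maxHeartbeats 2000000
set_option maxRecDepth 8000
set_option linter.unusedVariables false
set_option linter.unreachableTactic false
set_option linter.unnecessarySimpa false
set_option linter.unusedTactic false
set_option linter.unnecessarySeqFocus false

open MvPolynomial

/-- The variable `u_i` in `R(γ) = ℝ[u₁,v₁,…,u₄,v₄]` (faces indexed mod 4). -/
noncomputable def uv (i : ZMod 4) : MvPolynomial (ZMod 4 × Fin 2) ℝ :=
  MvPolynomial.X (i, 0)

/-- The variable `v_i` in `R(γ)`. -/
noncomputable def vv (i : ZMod 4) : MvPolynomial (ZMod 4 × Fin 2) ℝ :=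
  MvPolynomial.X (i, 1)

/-- `I¹(γ)` for a valence-4 vertex: sum over the 4 edges of the graph ideals of the
transition maps `u_i ↦ −v_{i+1}`, `v_i ↦ u_{i+1} + a₂ u_{i+1}² v_{i+1}` plus the squared
vanishing ideals. -/
noncomputable def Igamma4 (a₂ : ℝ) : Ideal (MvPolynomial (ZMod 4 × Fin 2) ℝ) :=
  ⨆ i : ZMod 4, Ideal.span
    {uv i + vv (i + 1),
     vv i - uv (i + 1) - C a₂ * (uv (i + 1)) ^ 2 * vv (i + 1),
     (uv i) ^ 2, (vv (i + 1)) ^ 2}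

/-- `T_d(γ)` in total degree. -/
noncomputable def TgammaTot (d : ℕ) : Submodule ℝ (MvPolynomial (ZMod 4 × Fin 2) ℝ) :=
  ⨆ i : ZMod 4,
    Submodule.map (MvPolynomial.rename (fun j : Fin 2 => (i, j))).toLinearMap
      (MvPolynomial.restrictTotalDegree (Fin 2) ℝ d)

/-- `T_{(d,d)}(γ)` in bidegree. -/
noncomputable def TgammaBi (d : ℕ) : Submodule ℝ (MvPolynomial (ZMod 4 × Fin 2) ℝ) :=
  ⨆ i : ZMod 4,
    Submodule.map (MvPolynomial.rename (fun j : Fin 2 => (i, j))).toLinearMap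
      (MvPolynomial.restrictDegree (Fin 2) ℝ d)

/-! ### Generators of `I¹(γ)` -/

lemma mem_I_of {a₂ : ℝ} (i : ZMod 4) {p : MvPolynomial (ZMod 4 × Fin 2) ℝ}
    (hp : p ∈ ({uv i + vv (i + 1),
     vv i - uv (i + 1) - C a₂ * (uv (i + 1)) ^ 2 * vv (i + 1),
     (uv i) ^ 2, (vv (i + 1)) ^ 2} : Set (MvPolynomial (ZMod 4 × Fin 2) ℝ))) :
    p ∈ Igamma4 a₂ :=
  (le_iSup (fun i : ZMod 4 => Ideal.span
    {uv i + vv (i + 1),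
     vv i - uv (i + 1) - C a₂ * (uv (i + 1)) ^ 2 * vv (i + 1),
     (uv i) ^ 2, (vv (i + 1)) ^ 2}) i) (Ideal.subset_span hp)

lemma hUV {a₂ : ℝ} (i : ZMod 4) : uv i + vv (i + 1) ∈ Igamma4 a₂ :=
  mem_I_of i (by simp)

lemma hU2 {a₂ : ℝ} (i : ZMod 4) : (uv i) ^ 2 ∈ Igamma4 a₂ :=
  mem_I_of i (by simp)

lemma hV2 {a₂ : ℝ} (i : ZMod 4) : (vv i) ^ 2 ∈ Igamma4 a₂ := by
  have h := mem_I_of (a₂ := a₂) (i - 1)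
    (p := (vv ((i-1) + 1)) ^ 2) (by simp)
  simpa using h

lemma hVU {a₂ : ℝ} (i : ZMod 4) : vv i - uv (i + 1) ∈ Igamma4 a₂ := by
  have h1 : vv i - uv (i + 1) - C a₂ * (uv (i + 1)) ^ 2 * vv (i + 1) ∈ Igamma4 a₂ :=
    mem_I_of i (by simp)
  have h2 : C a₂ * (uv (i + 1)) ^ 2 * vv (i + 1) ∈ Igamma4 a₂ := by
    have := Ideal.mul_mem_left (Igamma4 a₂) (C a₂ * vv (i+1)) (hU2 (i+1))
    have e : C a₂ * vv (i+1) * (uv (i + 1)) ^ 2 = C a₂ * (uv (i + 1)) ^ 2 * vv (i + 1) := by ring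
    rwa [e] at this
  have := add_mem h1 h2
  simpa using this

/-- The first claim: `I¹(γ)` equals the simplified span. -/
lemma ideal_eq (a₂ : ℝ) :
    Igamma4 a₂ = Ideal.span {p : MvPolynomial (ZMod 4 × Fin 2) ℝ |
      ∃ i : ZMod 4,
        p = uv i + vv (i + 1) ∨ p = vv i - uv (i + 1) ∨
        p = (uv i) ^ 2 ∨ p = (vv i) ^ 2} := by
  apply le_antisymm
  · apply iSup_le
    intro i
    rw [Ideal.span_le]
    rintro p hp
    simp only [Set.mem_insert_iff, Set.mem_singleton_iff] at hp
    rcases hp with rfl | rfl | rfl | rfl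
    · exact Ideal.subset_span ⟨i, Or.inl rfl⟩
    · have h1 : vv i - uv (i+1) ∈ Ideal.span {p : MvPolynomial (ZMod 4 × Fin 2) ℝ |
          ∃ i : ZMod 4, p = uv i + vv (i + 1) ∨ p = vv i - uv (i + 1) ∨
          p = (uv i) ^ 2 ∨ p = (vv i) ^ 2} := Ideal.subset_span ⟨i, Or.inr (Or.inl rfl)⟩
      have h2 : (uv (i+1))^2 ∈ Ideal.span {p : MvPolynomial (ZMod 4 × Fin 2) ℝ |
          ∃ i : ZMod 4, p = uv i + vv (i + 1) ∨ p = vv i - uv (i + 1) ∨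
          p = (uv i) ^ 2 ∨ p = (vv i) ^ 2} := Ideal.subset_span ⟨i+1, Or.inr (Or.inr (Or.inl rfl))⟩
      have h3 := Ideal.mul_mem_left _ (C a₂ * vv (i+1)) h2
      have hsub := sub_mem h1 h3
      have e : vv i - uv (i + 1) - C a₂ * vv (i+1) * (uv (i + 1)) ^ 2
          = vv i - uv (i + 1) - C a₂ * (uv (i + 1)) ^ 2 * vv (i + 1) := by ring
      rwa [e] at hsub
    · exact Ideal.subset_span ⟨i, Or.inr (Or.inr (Or.inl rfl))⟩
    · exact Ideal.subset_span ⟨i+1, Or.inr (Or.inr (Or.inr rfl))⟩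
  · rw [Ideal.span_le]
    rintro p ⟨i, rfl | rfl | rfl | rfl⟩
    · exact hUV i
    · exact hVU i
    · exact hU2 i
    · exact hV2 i

/-! ### Reduction modulo `I¹(γ)` to the span of `1, u₀, v₀, u₀v₀` -/

lemma Xcong {a₂ : ℝ} (n : ZMod 4 × Fin 2) :
    X n - uv 0 ∈ Igamma4 a₂ ∨ X n + uv 0 ∈ Igamma4 a₂ ∨
    X n - vv 0 ∈ Igamma4 a₂ ∨ X n + vv 0 ∈ Igamma4 a₂ := by
  obtain ⟨i, j⟩ := n
  rcases (by decide : ∀ k : ZMod 4, k = 0 ∨ k = 1 ∨ k = 2 ∨ k = 3) i with rfl | rfl | rfl | rfl <;>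
    rcases (by decide : ∀ k : Fin 2, k = 0 ∨ k = 1) j with rfl | rfl
  · exact Or.inl (by simpa [uv] using (Igamma4 a₂).zero_mem)
  · exact Or.inr (Or.inr (Or.inl (by simpa [vv] using (Igamma4 a₂).zero_mem)))
  · refine Or.inr (Or.inr (Or.inl ?_))
    have h := neg_mem (hVU (a₂ := a₂) 0)
    have e : -(vv 0 - uv (0+1)) = X ((1:ZMod 4), (0:Fin 2)) - vv 0 := by
      norm_num [uv, vv] <;> ring
    rwa [e] at h
  · refine Or.inr (Or.inl ?_)
    have h := hUV (a₂ := a₂) 0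
    have e : uv 0 + vv (0+1) = X ((1:ZMod 4), (1:Fin 2)) + uv 0 := by
      norm_num [uv, vv] <;> ring
    rwa [e] at h
  · refine Or.inr (Or.inl ?_)
    have h := sub_mem (hUV (a₂ := a₂) 0) (hVU (a₂ := a₂) 1)
    have e : (uv 0 + vv (0+1)) - (vv 1 - uv (1+1)) = X ((2:ZMod 4), (0:Fin 2)) + uv 0 := by
      norm_num [uv, vv] <;> ring
    rwa [e] at h
  · refine Or.inr (Or.inr (Or.inr ?_))
    have h := add_mem (hUV (a₂ := a₂) 1) (hVU (a₂ := a₂) 0)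
    have e : (uv 1 + vv (1+1)) + (vv 0 - uv (0+1)) = X ((2:ZMod 4), (1:Fin 2)) + vv 0 := by
      norm_num [uv, vv] <;> ring
    rwa [e] at h
  · refine Or.inr (Or.inr (Or.inr ?_))
    have h := sub_mem (add_mem (hVU (a₂ := a₂) 0) (hUV (a₂ := a₂) 1)) (hVU (a₂ := a₂) 2)
    have e : ((vv 0 - uv (0+1)) + (uv 1 + vv (1+1))) - (vv 2 - uv (2+1))
        = X ((3:ZMod 4), (0:Fin 2)) + vv 0 := by
      norm_num [uv, vv] <;> ring
    rwa [e] at h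
  · refine Or.inl ?_
    have h := add_mem (sub_mem (hUV (a₂ := a₂) 2) (hUV (a₂ := a₂) 0)) (hVU (a₂ := a₂) 1)
    have e : ((uv 2 + vv (2+1)) - (uv 0 + vv (0+1))) + (vv 1 - uv (1+1))
        = X ((3:ZMod 4), (1:Fin 2)) - uv 0 := by
      norm_num [uv, vv] <;> ring
    rwa [e] at h

/-- The candidate normal form `c₀ + c₁u₀ + c₂v₀ + c₃u₀v₀`. -/
noncomputable def combo (c₀ c₁ c₂ c₃ : ℝ) : MvPolynomial (ZMod 4 × Fin 2) ℝ :=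
  C c₀ + C c₁ * uv 0 + C c₂ * vv 0 + C c₃ * (uv 0 * vv 0)

lemma mul_u {a₂ : ℝ} {p : MvPolynomial (ZMod 4 × Fin 2) ℝ} {c₀ c₁ c₂ c₃ : ℝ}
    (hp : p - combo c₀ c₁ c₂ c₃ ∈ Igamma4 a₂) :
    p * uv 0 - combo 0 c₀ 0 c₂ ∈ Igamma4 a₂ := by
  have hid : p * uv 0 - combo 0 c₀ 0 c₂
      = (p - combo c₀ c₁ c₂ c₃) * uv 0 + (C c₁ + C c₃ * vv 0) * (uv 0) ^ 2 := by
    simp only [combo, map_zero]; ring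
  rw [hid]
  exact add_mem (Ideal.mul_mem_right _ _ hp) (Ideal.mul_mem_left _ _ (hU2 0))

lemma mul_v {a₂ : ℝ} {p : MvPolynomial (ZMod 4 × Fin 2) ℝ} {c₀ c₁ c₂ c₃ : ℝ}
    (hp : p - combo c₀ c₁ c₂ c₃ ∈ Igamma4 a₂) :
    p * vv 0 - combo 0 0 c₀ c₁ ∈ Igamma4 a₂ := by
  have hid : p * vv 0 - combo 0 0 c₀ c₁
      = (p - combo c₀ c₁ c₂ c₃) * vv 0 + (C c₂ + C c₃ * uv 0) * (vv 0) ^ 2 := by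
    simp only [combo, map_zero]; ring
  rw [hid]
  exact add_mem (Ideal.mul_mem_right _ _ hp) (Ideal.mul_mem_left _ _ (hV2 0))

/-- Every polynomial is congruent to some `c₀ + c₁u₀ + c₂v₀ + c₃u₀v₀` modulo `I¹(γ)`. -/
lemma reduce (a₂ : ℝ) (p : MvPolynomial (ZMod 4 × Fin 2) ℝ) :
    ∃ c₀ c₁ c₂ c₃ : ℝ, p - combo c₀ c₁ c₂ c₃ ∈ Igamma4 a₂ := by
  induction p using MvPolynomial.induction_on with
  | C a =>
      refine ⟨a, 0, 0, 0, ?_⟩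
      have : C a - combo a 0 0 0 = 0 := by simp [combo]
      rw [this]; exact zero_mem _
  | add p q hp hq =>
      obtain ⟨c₀, c₁, c₂, c₃, hc⟩ := hp
      obtain ⟨d₀, d₁, d₂, d₃, hd⟩ := hq
      refine ⟨c₀ + d₀, c₁ + d₁, c₂ + d₂, c₃ + d₃, ?_⟩
      have e : (p + q) - combo (c₀+d₀) (c₁+d₁) (c₂+d₂) (c₃+d₃)
          = (p - combo c₀ c₁ c₂ c₃) + (q - combo d₀ d₁ d₂ d₃) := by
        simp only [combo, map_add]; ring
      rw [e]; exact add_mem hc hd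
  | mul_X p n hp =>
      obtain ⟨c₀, c₁, c₂, c₃, hc⟩ := hp
      rcases Xcong (a₂ := a₂) n with h | h | h | h
      · refine ⟨0, c₀, 0, c₂, ?_⟩
        have e : p * X n - combo 0 c₀ 0 c₂
            = p * (X n - uv 0) + (p * uv 0 - combo 0 c₀ 0 c₂) := by ring
        rw [e]; exact add_mem (Ideal.mul_mem_left _ _ h) (mul_u hc)
      · refine ⟨0, -c₀, 0, -c₂, ?_⟩
        have e : p * X n - combo 0 (-c₀) 0 (-c₂)
            = p * (X n + uv 0) - (p * uv 0 - combo 0 c₀ 0 c₂) := by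
          simp only [combo, map_neg, map_zero]; ring
        rw [e]; exact sub_mem (Ideal.mul_mem_left _ _ h) (mul_u hc)
      · refine ⟨0, 0, c₀, c₁, ?_⟩
        have e : p * X n - combo 0 0 c₀ c₁
            = p * (X n - vv 0) + (p * vv 0 - combo 0 0 c₀ c₁) := by ring
        rw [e]; exact add_mem (Ideal.mul_mem_left _ _ h) (mul_v hc)
      · refine ⟨0, 0, -c₀, -c₁, ?_⟩
        have e : p * X n - combo 0 0 (-c₀) (-c₁)
            = p * (X n + vv 0) - (p * vv 0 - combo 0 0 c₀ c₁) := by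
          simp only [combo, map_neg, map_zero]; ring
        rw [e]; exact sub_mem (Ideal.mul_mem_left _ _ h) (mul_v hc)

/-! ### A four-dimensional model algebra -/

open TrivSqZeroExt DualNumber

noncomputable def ax : DualNumber (DualNumber ℝ) := TrivSqZeroExt.inl eps
noncomputable def ay : DualNumber (DualNumber ℝ) := eps

lemma ax_sq : ax * ax = 0 := by rw [ax, inl_mul_inl, eps_mul_eps, inl_zero]
lemma ay_sq : ay * ay = 0 := by rw [ay, eps_mul_eps]
lemma nxx : (-ax) * (-ax) = 0 := by rw [neg_mul_neg, ax_sq]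
lemma nyy : (-ay) * (-ay) = 0 := by rw [neg_mul_neg, ay_sq]

noncomputable def gtab : ZMod 4 × Fin 2 → DualNumber (DualNumber ℝ) := fun n =>
  match n.1.val, n.2.val with
  | 0, 0 => ax
  | 0, _ => ay
  | 1, 0 => ay
  | 1, _ => -ax
  | 2, 0 => -ax
  | 2, _ => -ay
  | _, 0 => -ay
  | _, _ => ax

noncomputable def phi : MvPolynomial (ZMod 4 × Fin 2) ℝ →ₐ[ℝ] DualNumber (DualNumber ℝ) :=
  aeval gtab

lemma phi_uv (i : ZMod 4) : phi (uv i) = gtab (i, 0) := by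
  rw [phi, uv]; exact aeval_X (R := ℝ) gtab _
lemma phi_vv (i : ZMod 4) : phi (vv i) = gtab (i, 1) := by
  rw [phi, vv]; exact aeval_X (R := ℝ) gtab _
lemma phi_C (r : ℝ) : phi (C r) = algebraMap ℝ _ r := by
  rw [phi]; exact aeval_C (R := ℝ) (f := gtab) r

lemma gkey : ∀ j : ZMod 4, gtab (j, 0) + gtab (j+1, 1) = 0 ∧ gtab (j,1) - gtab (j+1, 0) = 0 ∧
    gtab (j,0) * gtab (j,0) = 0 ∧ gtab (j,1) * gtab (j,1) = 0 := by
  intro j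
  rcases (by decide : ∀ k : ZMod 4, k = 0 ∨ k = 1 ∨ k = 2 ∨ k = 3) j with rfl | rfl | rfl | rfl
  · exact ⟨add_neg_cancel ax, sub_self ay, ax_sq, ay_sq⟩
  · exact ⟨add_neg_cancel ay, sub_self (-ax), ay_sq, nxx⟩
  · exact ⟨neg_add_cancel ax, sub_self (-ay), nxx, nyy⟩
  · exact ⟨neg_add_cancel ay, sub_self ax, nyy, ax_sq⟩

lemma I_le_ker (a₂ : ℝ) : Igamma4 a₂ ≤ RingHom.ker phi.toRingHom := by
  apply iSup_le
  intro i
  rw [Ideal.span_le]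
  rintro p hp
  simp only [Set.mem_insert_iff, Set.mem_singleton_iff] at hp
  obtain ⟨k1, k2, k3, k4⟩ := gkey i
  rw [SetLike.mem_coe, RingHom.mem_ker]
  show phi p = 0
  rcases hp with rfl | rfl | rfl | rfl
  · rw [map_add, phi_uv, phi_vv, k1]
  · have h3 := (gkey (i+1)).2.2.1
    rw [map_sub, map_sub, map_mul, map_mul, map_pow, phi_uv, phi_vv, phi_vv, phi_C, k2,
      pow_two, h3, mul_zero, zero_mul, sub_zero]
  · rw [map_pow, phi_uv, pow_two, k3]
  · have h4 := (gkey (i+1)).2.2.2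
    rw [map_pow, phi_vv, pow_two, h4]

lemma lin_ind : LinearIndependent ℝ ![(1 : DualNumber (DualNumber ℝ)), ax, ay, ax*ay] := by
  rw [Fintype.linearIndependent_iff]
  intro g hg
  rw [Fin.sum_univ_four] at hg
  simp only [Matrix.cons_val_zero, Matrix.cons_val_one, Matrix.head_cons,
    Matrix.cons_val_two, Matrix.cons_val_three, Matrix.tail_cons] at hg
  have h1 := congrArg (fun z : DualNumber (DualNumber ℝ) => z.fst.fst) hg
  have h2 := congrArg (fun z : DualNumber (DualNumber ℝ) => z.fst.snd) hg
  have h3 := congrArg (fun z : DualNumber (DualNumber ℝ) => z.snd.fst) hg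
  have h4 := congrArg (fun z : DualNumber (DualNumber ℝ) => z.snd.snd) hg
  simp only [ax, ay, DualNumber.eps, TrivSqZeroExt.inl_mul_inr, smul_eq_mul, mul_one,
    fst_add, snd_add, fst_smul, snd_smul, fst_inl, snd_inl, fst_inr, snd_inr, fst_one, snd_one,
    fst_zero, snd_zero, smul_zero, add_zero, zero_add, mul_zero] at h1 h2 h3 h4
  intro i; fin_cases i <;> simp_all

/-! ### The dimension count -/

lemma dim4 (a₂ : ℝ) (T : Submodule ℝ (MvPolynomial (ZMod 4 × Fin 2) ℝ))
    (h1 : 1 ∈ T) (hu : uv 0 ∈ T) (hv : vv 0 ∈ T) (huv : uv 0 * vv 0 ∈ T) :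
    Module.finrank ℝ
      (T ⧸ Submodule.comap T.subtype (Submodule.restrictScalars ℝ (Igamma4 a₂))) = 4 := by
  set I' := Submodule.restrictScalars ℝ (Igamma4 a₂) with hI'
  set m : T →ₗ[ℝ] (MvPolynomial (ZMod 4 × Fin 2) ℝ ⧸ I') := I'.mkQ ∘ₗ T.subtype with hm
  have hker : LinearMap.ker m = Submodule.comap T.subtype I' := by
    rw [hm, LinearMap.ker_comp, Submodule.ker_mkQ]
  set w : Fin 4 → (MvPolynomial (ZMod 4 × Fin 2) ℝ ⧸ I') :=
    ![I'.mkQ 1, I'.mkQ (uv 0), I'.mkQ (vv 0), I'.mkQ (uv 0 * vv 0)] with hw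
  have hle : I' ≤ LinearMap.ker phi.toLinearMap := by
    intro p hp
    have : phi p = 0 := I_le_ker a₂ hp
    exact LinearMap.mem_ker.mpr this
  set phibar := I'.liftQ phi.toLinearMap hle with hphibar
  have happ : ∀ q, phibar (I'.mkQ q) = phi q := fun q => rfl
  have hcomp : ⇑phibar ∘ w = ![(1 : DualNumber (DualNumber ℝ)), ax, ay, ax*ay] := by
    funext k
    fin_cases k
    · show phibar (I'.mkQ 1) = 1
      rw [happ]; exact map_one phi
    · show phibar (I'.mkQ (uv 0)) = ax
      rw [happ]; exact phi_uv 0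
    · show phibar (I'.mkQ (vv 0)) = ay
      rw [happ]; exact phi_vv 0
    · show phibar (I'.mkQ (uv 0 * vv 0)) = ax * ay
      rw [happ, map_mul, phi_uv 0, phi_vv 0]; rfl
  have hwind : LinearIndependent ℝ w := by
    apply LinearIndependent.of_comp phibar
    rw [hcomp]; exact lin_ind
  have hrange : LinearMap.range m = Submodule.span ℝ (Set.range w) := by
    apply le_antisymm
    · rintro x ⟨⟨p, hpT⟩, rfl⟩
      obtain ⟨c₀, c₁, c₂, c₃, hc⟩ := reduce a₂ p
      have heq : m ⟨p, hpT⟩ = I'.mkQ (combo c₀ c₁ c₂ c₃) := by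
        show I'.mkQ p = I'.mkQ (combo c₀ c₁ c₂ c₃)
        rw [Submodule.mkQ_apply, Submodule.mkQ_apply, Submodule.Quotient.eq]
        exact (Submodule.restrictScalars_mem ℝ _ _).mpr hc
      rw [heq]
      have hcombo : combo c₀ c₁ c₂ c₃
          = c₀ • (1 : MvPolynomial (ZMod 4 × Fin 2) ℝ) + c₁ • uv 0 + c₂ • vv 0
            + c₃ • (uv 0 * vv 0) := by
        simp only [combo, smul_eq_C_mul, mul_one]
      rw [hcombo, map_add, map_add, map_add, map_smul, map_smul, map_smul, map_smul]
      refine add_mem (add_mem (add_mem ?_ ?_) ?_) ?_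
      · exact Submodule.smul_mem _ _ (Submodule.subset_span ⟨(0 : Fin 4), rfl⟩)
      · exact Submodule.smul_mem _ _ (Submodule.subset_span ⟨(1 : Fin 4), rfl⟩)
      · exact Submodule.smul_mem _ _ (Submodule.subset_span ⟨(2 : Fin 4), rfl⟩)
      · exact Submodule.smul_mem _ _ (Submodule.subset_span ⟨(3 : Fin 4), rfl⟩)
    · rw [Submodule.span_le]
      rintro x ⟨k, rfl⟩
      fin_cases k
      · exact ⟨⟨1, h1⟩, rfl⟩
      · exact ⟨⟨uv 0, hu⟩, rfl⟩
      · exact ⟨⟨vv 0, hv⟩, rfl⟩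
      · exact ⟨⟨uv 0 * vv 0, huv⟩, rfl⟩
  have e := (Submodule.quotEquivOfEq _ _ hker.symm).trans m.quotKerEquivRange
  rw [e.finrank_eq, hrange, finrank_span_eq_card hwind, Fintype.card_fin]

/-! ### Membership of the representatives in `T` -/

lemma mem_TgammaBi {d : ℕ} (hd : 1 ≤ d) :
    1 ∈ TgammaBi d ∧ uv 0 ∈ TgammaBi d ∧ vv 0 ∈ TgammaBi d ∧ uv 0 * vv 0 ∈ TgammaBi d := by
  have hcomp :
      Submodule.map (MvPolynomial.rename (fun j : Fin 2 => ((0 : ZMod 4), j))).toLinearMap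
        (MvPolynomial.restrictDegree (Fin 2) ℝ d) ≤ TgammaBi d :=
    le_iSup (fun i : ZMod 4 =>
      Submodule.map (MvPolynomial.rename (fun j : Fin 2 => (i, j))).toLinearMap
        (MvPolynomial.restrictDegree (Fin 2) ℝ d)) 0
  have hmem : ∀ q : MvPolynomial (Fin 2) ℝ, q ∈ MvPolynomial.restrictDegree (Fin 2) ℝ d →
      (MvPolynomial.rename (fun j : Fin 2 => ((0 : ZMod 4), j))) q ∈ TgammaBi d := by
    intro q hq
    exact hcomp ⟨q, hq, rfl⟩
  refine ⟨?_, ?_, ?_, ?_⟩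
  · have h := hmem 1 ?_
    · rwa [map_one] at h
    · rw [mem_restrictDegree_iff_sup]
      intro i
      simp [degrees_one]
  · have h := hmem (X 0) ?_
    · rwa [rename_X] at h
    · rw [mem_restrictDegree_iff_sup]
      intro i
      calc Multiset.count i (X (0 : Fin 2) : MvPolynomial (Fin 2) ℝ).degrees
          ≤ 1 := by rw [degrees_X]; exact Multiset.count_le_card _ _ |>.trans (by simp)
        _ ≤ d := hd
  · have h := hmem (X 1) ?_
    · rwa [rename_X] at h
    · rw [mem_restrictDegree_iff_sup]
      intro i
      calc Multiset.count i (X (1 : Fin 2) : MvPolynomial (Fin 2) ℝ).degrees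
          ≤ 1 := by rw [degrees_X]; exact Multiset.count_le_card _ _ |>.trans (by simp)
        _ ≤ d := hd
  · have h := hmem (X 0 * X 1) ?_
    · rwa [map_mul, rename_X, rename_X] at h
    · rw [mem_restrictDegree_iff_sup]
      intro i
      have hdeg : (X (0 : Fin 2) * X 1 : MvPolynomial (Fin 2) ℝ).degrees ≤ {0, 1} := by
        refine le_trans degrees_mul_le ?_
        rw [degrees_X, degrees_X]
        rfl
      calc Multiset.count i (X (0 : Fin 2) * X 1 : MvPolynomial (Fin 2) ℝ).degrees
          ≤ Multiset.count i ({0, 1} : Multiset (Fin 2)) := Multiset.count_le_of_le i hdeg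
        _ ≤ 1 := by fin_cases i <;> simp
        _ ≤ d := hd

lemma mem_TgammaTot {d : ℕ} (hd : 2 ≤ d) :
    1 ∈ TgammaTot d ∧ uv 0 ∈ TgammaTot d ∧ vv 0 ∈ TgammaTot d ∧ uv 0 * vv 0 ∈ TgammaTot d := by
  have hcomp :
      Submodule.map (MvPolynomial.rename (fun j : Fin 2 => ((0 : ZMod 4), j))).toLinearMap
        (MvPolynomial.restrictTotalDegree (Fin 2) ℝ d) ≤ TgammaTot d :=
    le_iSup (fun i : ZMod 4 =>
      Submodule.map (MvPolynomial.rename (fun j : Fin 2 => (i, j))).toLinearMap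
        (MvPolynomial.restrictTotalDegree (Fin 2) ℝ d)) 0
  have hmem : ∀ q : MvPolynomial (Fin 2) ℝ, q ∈ MvPolynomial.restrictTotalDegree (Fin 2) ℝ d →
      (MvPolynomial.rename (fun j : Fin 2 => ((0 : ZMod 4), j))) q ∈ TgammaTot d := by
    intro q hq
    exact hcomp ⟨q, hq, rfl⟩
  refine ⟨?_, ?_, ?_, ?_⟩
  · have h := hmem 1 ?_
    · rwa [map_one] at h
    · rw [mem_restrictTotalDegree]
      simp
  · have h := hmem (X 0) ?_
    · rwa [rename_X] at h
    · rw [mem_restrictTotalDegree, totalDegree_X]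
      omega
  · have h := hmem (X 1) ?_
    · rwa [rename_X] at h
    · rw [mem_restrictTotalDegree, totalDegree_X]
      omega
  · have h := hmem (X 0 * X 1) ?_
    · rwa [map_mul, rename_X, rename_X] at h
    · rw [mem_restrictTotalDegree]
      refine le_trans (totalDegree_mul _ _) ?_
      rw [totalDegree_X, totalDegree_X]
      omega

/-- For an interior vertex shared by exactly 4 faces with transition maps
`u_i ↦ −v_{i+1}`, `v_i ↦ u_{i+1} + a₂ u_{i+1}² v_{i+1}`:
`I¹(γ) = ⟨u_i + v_{i+1}, v_i − u_{i+1}, u_i², v_i² : i = 1,…,4⟩`; moreover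
`dim Q¹_{(d,d)}(γ) = 4` for `d ≥ 1` and `dim Q¹_d(γ) = 4` for `d ≥ 2`. -/
theorem stmt13 (a₂ : ℝ) :
    Igamma4 a₂ = Ideal.span {p : MvPolynomial (ZMod 4 × Fin 2) ℝ |
      ∃ i : ZMod 4,
        p = uv i + vv (i + 1) ∨ p = vv i - uv (i + 1) ∨
        p = (uv i) ^ 2 ∨ p = (vv i) ^ 2} ∧
    (∀ d : ℕ, 1 ≤ d →
      Module.finrank ℝ
        (↥(TgammaBi d) ⧸ Submodule.comap (TgammaBi d).subtype
          (Submodule.restrictScalars ℝ (Igamma4 a₂))) = 4) ∧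
    (∀ d : ℕ, 2 ≤ d →
      Module.finrank ℝ
        (↥(TgammaTot d) ⧸ Submodule.comap (TgammaTot d).subtype
          (Submodule.restrictScalars ℝ (Igamma4 a₂))) = 4) := by
  refine ⟨ideal_eq a₂, ?_, ?_⟩
  · intro d hd
    obtain ⟨h1, hu, hv, huv⟩ := mem_TgammaBi hd
    exact dim4 a₂ (TgammaBi d) h1 hu hv huv
  · intro d hd
    obtain ⟨h1, hu, hv, huv⟩ := mem_TgammaTot hd
    exact dim4 a₂ (TgammaTot d) h1 hu hv huv
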